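/- arXiv:1004.4236 — 3 statements merged into one kernel-verified Lean document; each statement's English description precedes it below -/
import Mathlib

section
/- Let G be a graph on N vertices with edge density satisfying t_{K₂}(G) ≥ (1−δ)p, and suppose at least εN vertices of G have degree less than (1−ε)pN, where 0 < ε, p < 1. Then hom(K_{1,2}, G) ≥ (1 + ε³ − g(δ)) p² N³ for an explicit function g with g(δ) → 0 as δ → 0; more precisely, writing δ(v) = |N(v)| − pN, one has Σ_v |N(v)|² = p²N³ + 2pN Σ_v δ(v) + Σ_v δ(v)², and Σ_v δ(v)² ≥ ε³ p² N³. -/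
open Finset

noncomputable def homCount {α β : Type*} (H : SimpleGraph α) (G : SimpleGraph β) : ℕ :=
  Nat.card {f : α → β // ∀ ⦃a b⦄, H.Adj a b → G.Adj (f a) (f b)}

noncomputable def homDensity {α β : Type*} (H : SimpleGraph α) (G : SimpleGraph β) : ℝ :=
  (homCount H G : ℝ) / (Nat.card β : ℝ) ^ (Nat.card α)

/-! Writing `δ(v) = deg v - pN`, the identity is the expansion of `(pN + δ(v))²`. Its middle
term is controlled by the edge density, which forces `Σ_v δ(v) ≥ -δpN²`, and its last term by
the `εN` low-degree vertices, each of which contributes `δ(v)² ≥ (εpN)²`. -/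

section SumOfSquares

variable {ι : Type*} [Fintype ι]

theorem sum_sq_eq_card_mul_sq_add_sum_sub_add_sum_sub_sq (f : ι → ℝ) (c : ℝ) :
    ∑ i, f i ^ 2 =
      Fintype.card ι * c ^ 2 + 2 * c * ∑ i, (f i - c) + ∑ i, (f i - c) ^ 2 := by
  simp only [sub_sq, sum_add_distrib, sum_sub_distrib, sum_const, card_univ, nsmul_eq_mul]
  rw [← sum_mul, ← mul_sum]
  ring

theorem card_lt_mul_sq_le_sum_sub_sq (f : ι → ℝ) {a c t : ℝ} (ht : 0 ≤ t) (hact : a + t ≤ c) :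
    Nat.card {i | f i < a} * t ^ 2 ≤ ∑ i, (f i - c) ^ 2 := by
  classical
  have hfar : ∀ i ∈ univ.filter (f · < a), t ^ 2 ≤ (f i - c) ^ 2 := fun i hi => by
    have : f i < a := (mem_filter.mp hi).2
    nlinarith
  calc (Nat.card {i | f i < a} : ℝ) * t ^ 2
      = ∑ i ∈ univ.filter (f · < a), t ^ 2 := by
        rw [sum_const, nsmul_eq_mul, Nat.card_eq_card_toFinset, Set.toFinset_ofPred]
    _ ≤ ∑ i ∈ univ.filter (f · < a), (f i - c) ^ 2 := sum_le_sum hfar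
    _ ≤ ∑ i, (f i - c) ^ 2 :=
        sum_le_sum_of_subset_of_nonneg (filter_subset _ _) fun _ _ _ => sq_nonneg _

end SumOfSquares

section EdgeDensity

variable {β : Type*} [Fintype β] (G : SimpleGraph β) [DecidableRel G.Adj]

def homCompleteGraphFinTwoEquivDart :
    {f : Fin 2 → β // ∀ ⦃a b⦄, (SimpleGraph.completeGraph (Fin 2)).Adj a b → G.Adj (f a) (f b)}
      ≃ G.Dart where
  toFun f := ⟨(f.1 0, f.1 1), f.2 (by decide : (0 : Fin 2) ≠ 1)⟩
  invFun d := ⟨![d.fst, d.snd], fun a b hab => by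
    fin_cases a <;> fin_cases b <;> simp_all [d.adj, d.adj.symm]⟩
  left_inv f := by ext i; fin_cases i <;> rfl
  right_inv d := rfl

theorem homCount_completeGraph_fin_two :
    homCount (SimpleGraph.completeGraph (Fin 2)) G = ∑ v, G.degree v := by
  rw [homCount, Nat.card_congr (homCompleteGraphFinTwoEquivDart G), Nat.card_eq_fintype_card,
    SimpleGraph.dart_card_eq_sum_degrees]

theorem homDensity_completeGraph_fin_two_mul_card_sq :
    homDensity (SimpleGraph.completeGraph (Fin 2)) G * Fintype.card β ^ 2 =
      ∑ v, (G.degree v : ℝ) := by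
  rw [homDensity, homCount_completeGraph_fin_two, Nat.card_eq_fintype_card,
    Nat.card_eq_fintype_card, Fintype.card_fin, Nat.cast_sum]
  refine div_mul_cancel_of_imp fun hcard => ?_
  have : IsEmpty β := Fintype.card_eq_zero_iff.mp (by simpa using hcard)
  simp [univ_eq_empty]

end EdgeDensity

theorem many_low_degree_vertices_general {β : Type*} [Fintype β] (G : SimpleGraph β)
    [DecidableRel G.Adj] (N : ℕ) (hN : N = Fintype.card β)
    (p ε δ : ℝ) (hp : 0 < p) (hε : 0 < ε)
    (hedge : homDensity (SimpleGraph.completeGraph (Fin 2)) G ≥ (1 - δ) * p)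
    (hlow : ε * N ≤ Nat.card {v : β | (G.degree v : ℝ) < (1 - ε) * p * N}) :
    (∑ v : β, (G.degree v : ℝ) ^ 2 =
        p ^ 2 * N ^ 3 + 2 * p * N * (∑ v : β, ((G.degree v : ℝ) - p * N)) +
          ∑ v : β, ((G.degree v : ℝ) - p * N) ^ 2) ∧
    (∑ v : β, ((G.degree v : ℝ) - p * N) ^ 2 ≥ ε ^ 3 * p ^ 2 * N ^ 3) ∧
    (∑ v : β, (G.degree v : ℝ) ^ 2 ≥ (1 + ε ^ 3 - 2 * δ) * p ^ 2 * N ^ 3) := by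
  subst hN
  set N : ℕ := Fintype.card β
  have hexpand := sum_sq_eq_card_mul_sq_add_sum_sub_add_sum_sub_sq (fun v => (G.degree v : ℝ))
    (p * N)
  have hdeviation : ε ^ 3 * p ^ 2 * N ^ 3 ≤ ∑ v, ((G.degree v : ℝ) - p * N) ^ 2 :=
    calc ε ^ 3 * p ^ 2 * N ^ 3 = ε * N * (ε * p * N) ^ 2 := by ring
      _ ≤ Nat.card {v : β | (G.degree v : ℝ) < (1 - ε) * p * N} * (ε * p * N) ^ 2 := by
        gcongr
      _ ≤ _ := card_lt_mul_sq_le_sum_sub_sq _ (by positivity) (by linarith)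
  have hdegree : (1 - δ) * p * N ^ 2 ≤ ∑ v, (G.degree v : ℝ) := by
    rw [← homDensity_completeGraph_fin_two_mul_card_sq]
    gcongr
  have hdrift : -(δ * p * N ^ 2) ≤ ∑ v, ((G.degree v : ℝ) - p * N) := by
    rw [sum_sub_distrib, sum_const, card_univ, nsmul_eq_mul]
    linarith
  refine ⟨by rw [hexpand]; ring, hdeviation, ?_⟩
  have hcross : 0 ≤ 2 * p * N * (∑ v, ((G.degree v : ℝ) - p * N) + δ * p * N ^ 2) :=
    mul_nonneg (by positivity) (by linarith)
  linarith

/-- The claim in the proof of Theorem 1.6: if `t_{K₂}(G) ≥ (1−δ)p` and at least `εN`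
vertices have degree less than `(1−ε)pN`, then, writing `δ(v) = deg(v) − pN`, we have
`Σ_v deg(v)² = p²N³ + 2pN Σ_v δ(v) + Σ_v δ(v)²`, `Σ_v δ(v)² ≥ ε³p²N³`, and hence
`hom(K_{1,2}, G) = Σ_v deg(v)² ≥ (1 + ε³ − 2δ)p²N³`. -/
theorem many_low_degree_vertices {β : Type*} [Fintype β] (G : SimpleGraph β)
    [DecidableRel G.Adj] (N : ℕ) (hN : N = Fintype.card β)
    (p ε δ : ℝ) (hp : 0 < p) (hp1 : p < 1) (hε : 0 < ε) (hε1 : ε < 1) (hδ : 0 ≤ δ)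
    (hedge : homDensity (SimpleGraph.completeGraph (Fin 2)) G ≥ (1 - δ) * p)
    (hlow : ε * N ≤ Nat.card {v : β | (G.degree v : ℝ) < (1 - ε) * p * N}) :
    (∑ v : β, (G.degree v : ℝ) ^ 2 =
        p ^ 2 * N ^ 3 + 2 * p * N * (∑ v : β, ((G.degree v : ℝ) - p * N)) +
          ∑ v : β, ((G.degree v : ℝ) - p * N) ^ 2) ∧
    (∑ v : β, ((G.degree v : ℝ) - p * N) ^ 2 ≥ ε ^ 3 * p ^ 2 * N ^ 3) ∧
    (∑ v : β, (G.degree v : ℝ) ^ 2 ≥ (1 + ε ^ 3 - 2 * δ) * p ^ 2 * N ^ 3) :=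
  many_low_degree_vertices_general G N hN p ε δ hp hε hedge hlow
end

section
/- Every complete bipartite graph K_{a,b} satisfies Sidorenko's conjecture: for all positive integers a, b and every graph G, t_{K_{a,b}}(G) ≥ t_{K₂}(G)^{ab}. -/
open Finset

/-!
A homomorphism `K_{a,b} → G` is an `a`-tuple `u` of vertices together with a `b`-tuple in the
common neighbourhood `N(u)`, so `t_{K_{a,b}}(G)` is the mean over `u` of `(|N(u)|/n)^b`.
By Jensen this is at least `(𝔼_u |N(u)|/n)^b`. Counting the pairs `(u, y)` with `y ∈ N(u)` by `y`
instead turns `𝔼_u |N(u)|/n` into `𝔼_y (deg y/n)^a`, which by Jensen again is at least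
`(𝔼_y deg y/n)^a = t_{K₂}(G)^a`.
-/

open scoped BigOperators

lemma pow_expect_le_expect_pow {ι : Type*} (s : Finset ι) {f : ι → ℝ} (hf : ∀ i ∈ s, 0 ≤ f i)
    {k : ℕ} (hk : k ≠ 0) : (𝔼 i ∈ s, f i) ^ k ≤ 𝔼 i ∈ s, f i ^ k := by
  rcases s.eq_empty_or_nonempty with rfl | hs
  · simp [hk]
  have hw : ∑ _i ∈ s, (#s : ℝ)⁻¹ = 1 := by simp [hs.ne_empty]
  simpa [expect_eq_sum_div_card, div_eq_inv_mul, mul_sum] using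
    Real.pow_arith_mean_le_arith_mean_pow s _ f (fun _ _ => by positivity) hw hf k

namespace SimpleGraph

lemma homCount_congr {α α' V : Type*} {H : SimpleGraph α} {H' : SimpleGraph α'} (e : H ≃g H')
    (G : SimpleGraph V) : homCount H G = homCount H' G :=
  Nat.card_congr <| (e.toEquiv.arrowCongr (Equiv.refl V)).subtypeEquiv fun f => by
    refine ⟨fun h a' b' hab => h (e.symm.map_adj_iff.2 hab), fun h a b hab => ?_⟩
    convert h (e.map_adj_iff.2 hab) <;> exact congrArg f (e.symm_apply_apply _).symm

lemma homDensity_congr {α α' V : Type*} {H : SimpleGraph α} {H' : SimpleGraph α'} (e : H ≃g H')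
    (G : SimpleGraph V) : homDensity H G = homDensity H' G := by
  rw [homDensity, homDensity, homCount_congr e, Nat.card_congr e.toEquiv]

def completeGraphFinTwoIso : completeGraph (Fin 2) ≃g completeBipartiteGraph (Fin 1) (Fin 1) where
  toEquiv := (finSumFinEquiv (m := 1) (n := 1)).symm
  map_rel_iff' {a b} := by fin_cases a <;> fin_cases b <;> simp [finSumFinEquiv] <;> decide

variable {V : Type*} (G : SimpleGraph V)

def homCompleteBipartiteGraphEquiv (ι κ : Type*) :
    {f : ι ⊕ κ → V // ∀ ⦃a b⦄, (completeBipartiteGraph ι κ).Adj a b → G.Adj (f a) (f b)} ≃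
      (u : ι → V) × (κ → ⋂ i, G.neighborSet (u i)) where
  toFun f :=
    ⟨fun i => f.1 (.inl i), fun j => ⟨f.1 (.inr j), Set.mem_iInter.2 fun _ => f.2 (by simp)⟩⟩
  invFun p := ⟨Sum.elim p.1 fun j => p.2 j, by
    rintro (i | j) (i' | j') h <;> simp at h
    · exact Set.mem_iInter.1 (p.2 j').2 i
    · exact (Set.mem_iInter.1 (p.2 j).2 i').symm⟩
  left_inv f := by ext (i | j) <;> rfl
  right_inv p := rfl

def sigmaIInterNeighborSetEquiv (ι : Type*) :
    (u : ι → V) × ⋂ i, G.neighborSet (u i) ≃ (y : V) × (ι → G.neighborSet y) where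
  toFun p := ⟨p.2, fun i => ⟨p.1 i, (Set.mem_iInter.1 p.2.2 i).symm⟩⟩
  invFun q := ⟨fun i => q.2 i, q.1, Set.mem_iInter.2 fun i => (q.2 i).2.symm⟩
  left_inv _ := rfl
  right_inv _ := rfl

variable [Fintype V] {ι κ : Type*} [Fintype ι] [DecidableEq ι]

lemma homCount_completeBipartiteGraph [Finite κ] :
    homCount (completeBipartiteGraph ι κ) G =
      ∑ u : ι → V, Nat.card (⋂ i, G.neighborSet (u i)) ^ Nat.card κ := by
  simp_rw [homCount, Nat.card_congr (G.homCompleteBipartiteGraphEquiv ι κ), Nat.card_sigma,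
    Nat.card_fun]

lemma sum_card_iInter_neighborSet :
    ∑ u : ι → V, Nat.card (⋂ i, G.neighborSet (u i)) =
      ∑ y, Nat.card (G.neighborSet y) ^ Nat.card ι := by
  simp_rw [← Nat.card_sigma, Nat.card_congr (G.sigmaIInterNeighborSetEquiv ι), Nat.card_sigma,
    Nat.card_fun]

lemma homDensity_completeBipartiteGraph [Finite κ] :
    homDensity (completeBipartiteGraph ι κ) G =
      𝔼 u : ι → V, ((Nat.card (⋂ i, G.neighborSet (u i)) : ℝ) / Nat.card V) ^ Nat.card κ := by
  rw [homDensity, homCount_completeBipartiteGraph, expect_eq_sum_div_card]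
  simp [div_pow, ← sum_div, Nat.card_sum, pow_add, div_div, mul_comm, Nat.card_eq_fintype_card]

lemma expect_card_iInter_neighborSet_div :
    𝔼 u : ι → V, (Nat.card (⋂ i, G.neighborSet (u i)) : ℝ) / Nat.card V =
      𝔼 y, ((Nat.card (G.neighborSet y) : ℝ) / Nat.card V) ^ Nat.card ι := by
  have h := congrArg (Nat.cast (R := ℝ)) (G.sum_card_iInter_neighborSet (ι := ι))
  push_cast at h
  simp_rw [expect_eq_sum_div_card, div_pow, ← sum_div, h, div_div, card_univ, Fintype.card_fun,
    Nat.card_eq_fintype_card, Nat.cast_pow, mul_comm]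

lemma homDensity_completeGraph_fin_two :
    homDensity (completeGraph (Fin 2)) G = 𝔼 y, (Nat.card (G.neighborSet y) : ℝ) / Nat.card V := by
  rw [homDensity_congr completeGraphFinTwoIso, homDensity_completeBipartiteGraph]
  simpa using G.expect_card_iInter_neighborSet_div (ι := Fin 1)

end SimpleGraph

/-- Sidorenko's conjecture for complete bipartite graphs:
`t_{K_{a,b}}(G) ≥ t_{K₂}(G)^{ab}` for all positive integers `a, b` and every graph `G`. -/
theorem sidorenko_completeBipartite {β : Type*} [Fintype β] (G : SimpleGraph β)
    (a b : ℕ) (ha : 0 < a) (hb : 0 < b) :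
    homDensity (completeBipartiteGraph (Fin a) (Fin b)) G ≥
      homDensity (SimpleGraph.completeGraph (Fin 2)) G ^ (a * b) := by
  set d : β → ℝ := fun y => (Nat.card (G.neighborSet y) : ℝ) / Nat.card β
  set m : (Fin a → β) → ℝ := fun u => (Nat.card (⋂ i, G.neighborSet (u i)) : ℝ) / Nat.card β
  have hd : ∀ y ∈ univ, 0 ≤ d y := fun _ _ => by positivity
  have hm : ∀ u ∈ univ, 0 ≤ m u := fun _ _ => by positivity
  rw [G.homDensity_completeGraph_fin_two, G.homDensity_completeBipartiteGraph, Nat.card_fin]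
  calc (𝔼 y, d y) ^ (a * b) = ((𝔼 y, d y) ^ a) ^ b := pow_mul _ _ _
    _ ≤ (𝔼 y, d y ^ a) ^ b := by gcongr; exact pow_expect_le_expect_pow _ hd ha.ne'
    _ = (𝔼 u, m u) ^ b := by rw [G.expect_card_iInter_neighborSet_div, Nat.card_fin]
    _ ≤ 𝔼 u, m u ^ b := pow_expect_le_expect_pow _ hm hb.ne'
end

section
/- Let G be a graph on N vertices, r and d positive integers, and for each k let X_k = Σ_{S rare} |N(S)|^r, where the sum is over 'rare' sequences S of k vertices (|N(S)| ≤ c · N for a threshold c ≥ 0). Then X_k ≤ N^k · (cN)^r. Moreover, if T ranges over sequences of r vertices that are 'bad with respect to k' (meaning at least β|N(T)|^k sequences of k vertices in N(T) are rare, with β > 0), then X_k ≥ β N^{r − rk/d} (Σ_{T bad} |N(T)|^d)^{k/d} whenever k ≥ d, by convexity of x ↦ x^{k/d}. -/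
open Finset

/-- The size of the common neighborhood of a sequence of vertices. -/
noncomputable def cnCard {V : Type*} (G : SimpleGraph V) {k : ℕ} (S : Fin k → V) : ℕ :=
  Nat.card {v : V | ∀ i, G.Adj (S i) v}

open scoped Classical in
lemma cnCard_pow_eq_sum {V : Type*} [Fintype V] (G : SimpleGraph V) {k : ℕ} (S : Fin k → V)
    (r : ℕ) :
    ((cnCard G S : ℝ)) ^ r = ∑ T : Fin r → V, if (∀ j i, G.Adj (T i) (S j)) then (1:ℝ) else 0 := by
  rw [Finset.sum_boole]
  have h1 : #(Finset.univ.filter fun T : Fin r → V => ∀ j i, G.Adj (T i) (S j))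
      = Nat.card {T : Fin r → V // ∀ j i, G.Adj (T i) (S j)} := by
    rw [Nat.card_eq_fintype_card, Fintype.card_subtype]
  have h2 : Nat.card {T : Fin r → V // ∀ j i, G.Adj (T i) (S j)}
      = Nat.card {T : Fin r → V // ∀ i j, G.Adj (T i) (S j)} :=
    Nat.card_congr (Equiv.subtypeEquivRight fun T => forall_swap)
  have h3 : Nat.card {T : Fin r → V // ∀ i j, G.Adj (T i) (S j)}
      = Nat.card (Fin r → {v : V // ∀ j, G.Adj v (S j)}) :=
    Nat.card_congr (Equiv.subtypePiEquivPi (p := fun _ v => ∀ j, G.Adj v (S j)))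
  have h4 : Nat.card (Fin r → {v : V // ∀ j, G.Adj v (S j)})
      = cnCard G S ^ r := by
    rw [Nat.card_fun, Nat.card_eq_fintype_card (α := Fin r), Fintype.card_fin]
    congr 1
    exact Nat.card_congr (Equiv.subtypeEquivRight fun v => by
      simp only [Set.mem_setOf_eq]
      exact forall_congr' fun j => G.adj_comm v (S j))
  rw [h1, h2, h3, h4]
  push_cast
  ring

open scoped Classical in
lemma card_subtype_cast {α : Type*} [Fintype α] (P : α → Prop) :
    ((Nat.card {x : α // P x} : ℝ)) = ∑ x : α, if P x then (1:ℝ) else 0 := by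
  rw [Finset.sum_boole, Nat.card_eq_fintype_card, Fintype.card_subtype]

open scoped Classical in
/-- The double-counting step of Lemma 2.1. Let `G` be a graph on `N` vertices, `c ≥ 0` a
threshold, and call a sequence `S` of `k` vertices rare if `|N(S)| ≤ cN`, and a sequence
`T` of `r` vertices bad if at least `β|N(T)|^k` sequences of `k` vertices in `N(T)` are
rare. Then `X_k = Σ_{S rare} |N(S)|^r` satisfies `X_k ≤ N^k (cN)^r`, and, for `k ≥ d`,
`X_k ≥ β N^{r−rk/d} (Σ_{T bad} |N(T)|^d)^{k/d}` by convexity of `x ↦ x^{k/d}`. -/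
theorem double_counting_convexity {V : Type*} [Fintype V] (G : SimpleGraph V)
    (N r d k : ℕ) (hN : N = Nat.card V) (hr : 0 < r) (hd : 0 < d) (hk : d ≤ k)
    (c : ℝ) (hc : 0 ≤ c) (β : ℝ) (hβ : 0 < β) :
    (∑ S : Fin k → V, (if (cnCard G S : ℝ) ≤ c * N then (cnCard G S : ℝ) ^ r else 0)) ≤
        (N : ℝ) ^ k * (c * N) ^ r ∧
    (∑ S : Fin k → V, (if (cnCard G S : ℝ) ≤ c * N then (cnCard G S : ℝ) ^ r else 0)) ≥
      β * (N : ℝ) ^ ((r : ℝ) - r * k / d) *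
        (∑ T : Fin r → V,
          (if (Nat.card {S : Fin k → V //
                (∀ j i, G.Adj (T i) (S j)) ∧ (cnCard G S : ℝ) ≤ c * N} : ℝ) ≥
              β * (cnCard G T : ℝ) ^ k
            then (cnCard G T : ℝ) ^ d else 0)) ^ ((k : ℝ) / d) := by
  have hkpos : 0 < k := lt_of_lt_of_le hd hk
  have hNV : Nat.card V = Fintype.card V := Nat.card_eq_fintype_card
  constructor
  · -- upper bound
    calc ∑ S : Fin k → V, (if (cnCard G S : ℝ) ≤ c * N then (cnCard G S : ℝ) ^ r else 0)
        ≤ ∑ _S : Fin k → V, (c * N) ^ r := by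
          apply Finset.sum_le_sum
          intro S _
          split_ifs with h
          · exact pow_le_pow_left₀ (by positivity) h r
          · positivity
      _ = (N : ℝ) ^ k * (c * N) ^ r := by
          rw [Finset.sum_const, Finset.card_univ, Fintype.card_fun, Fintype.card_fin,
            nsmul_eq_mul, ← hNV, ← hN]
          push_cast
          ring
  · -- lower bound
    set rare : (Fin k → V) → Prop := fun S => (cnCard G S : ℝ) ≤ c * N with hrare
    set bad : (Fin r → V) → Prop := fun T =>
      (Nat.card {S : Fin k → V //
        (∀ j i, G.Adj (T i) (S j)) ∧ (cnCard G S : ℝ) ≤ c * N} : ℝ) ≥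
        β * (cnCard G T : ℝ) ^ k with hbad
    set z : (Fin r → V) → ℝ := fun T => if bad T then (cnCard G T : ℝ) ^ d else 0 with hz
    have hznn : ∀ T, 0 ≤ z T := fun T => by rw [hz]; dsimp only; positivity
    have hp1 : (1:ℝ) ≤ (k:ℝ) / d := by
      rw [le_div_iff₀ (by positivity : (0:ℝ) < (d:ℝ)), one_mul]
      exact_mod_cast hk
    -- Step 1: double counting
    have step1 : (∑ S : Fin k → V, (if rare S then (cnCard G S : ℝ) ^ r else 0))
        = ∑ T : Fin r → V,
          (Nat.card {S : Fin k → V // (∀ j i, G.Adj (T i) (S j)) ∧ rare S} : ℝ) := by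
      have : ∀ S : Fin k → V, (if rare S then (cnCard G S : ℝ) ^ r else 0)
          = ∑ T : Fin r → V,
            (if (∀ j i, G.Adj (T i) (S j)) ∧ rare S then (1:ℝ) else 0) := by
        intro S
        by_cases h : rare S
        · rw [if_pos h, cnCard_pow_eq_sum]
          exact Finset.sum_congr rfl fun T _ => by
            simp only [h, and_true]
        · rw [if_neg h]
          symm
          apply Finset.sum_eq_zero
          intro T _
          rw [if_neg (fun hc => h hc.2)]
      rw [Finset.sum_congr rfl fun S _ => this S, Finset.sum_comm]
      refine Finset.sum_congr rfl fun T _ => ?_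
      rw [card_subtype_cast]
      exact Finset.sum_congr rfl fun S _ => by
        rcases Classical.em ((∀ j i, G.Adj (T i) (S j)) ∧ rare S) with h | h
        · rw [if_pos h, if_pos h]
        · rw [if_neg h, if_neg h]
    rw [step1]
    -- Step 2: restrict to bad T
    have step2 : ∑ T : Fin r → V,
          (Nat.card {S : Fin k → V // (∀ j i, G.Adj (T i) (S j)) ∧ rare S} : ℝ)
        ≥ β * ∑ T : Fin r → V, (if bad T then (cnCard G T : ℝ) ^ k else 0) := by
      rw [Finset.mul_sum]
      apply Finset.sum_le_sum
      intro T _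
      by_cases h : bad T
      · rw [if_pos h]
        exact h
      · rw [if_neg h, mul_zero]
        positivity
    refine le_trans ?_ step2
    -- Step 3: convexity
    rcases Nat.eq_zero_or_pos N with hN0 | hNpos
    · -- N = 0 : everything vanishes
      have hVempty : IsEmpty V := by
        rw [hN0, hNV] at hN
        exact Fintype.card_eq_zero_iff.mp hN.symm
      have hfe : IsEmpty (Fin r → V) := by
        exact Function.isEmpty (f := fun T : Fin r → V => T ⟨0, hr⟩)
      have h0 : (∑ T : Fin r → V, z T) = 0 := by
        rw [Finset.univ_eq_empty, Finset.sum_empty]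
      have h0' : (∑ T : Fin r → V, (if bad T then (cnCard G T : ℝ) ^ k else 0)) = 0 := by
        rw [Finset.univ_eq_empty, Finset.sum_empty]
      rw [h0', h0, mul_zero]
      rw [Real.zero_rpow (by positivity : ((k:ℝ)/d) ≠ 0), mul_zero]
    · -- N > 0
      have hNR : (0:ℝ) < (N:ℝ) := by exact_mod_cast hNpos
      have hcard : (Fintype.card (Fin r → V) : ℝ) = (N:ℝ) ^ r := by
        rw [Fintype.card_fun, Fintype.card_fin, hN, hNV]; push_cast; ring
      set n : ℝ := (N:ℝ) ^ r with hn
      have hnpos : 0 < n := by positivity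
      have key := Real.rpow_arith_mean_le_arith_mean_rpow Finset.univ
        (fun _ : Fin r → V => 1 / n) z
        (fun i _ => by positivity)
        (by rw [Finset.sum_const, Finset.card_univ, nsmul_eq_mul, hcard]
            field_simp)
        (fun i _ => hznn i) hp1
      have hzp : ∀ T, z T ^ ((k:ℝ)/d) = (if bad T then (cnCard G T : ℝ) ^ k else 0) := by
        intro T
        rw [hz]
        dsimp only
        by_cases h : bad T
        · rw [if_pos h, if_pos h, ← Real.rpow_natCast (cnCard G T : ℝ) d,
            ← Real.rpow_mul (by positivity), ← Real.rpow_natCast (cnCard G T : ℝ) k]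
          congr 1
          field_simp
        · rw [if_neg h, if_neg h, Real.zero_rpow (by positivity : ((k:ℝ)/d) ≠ 0)]
      -- rewrite key
      have lhs_eq : (∑ T : Fin r → V, (1/n) * z T) = (∑ T : Fin r → V, z T) / n := by
        rw [Finset.sum_div]
        exact Finset.sum_congr rfl fun T _ => by ring
      have rhs_eq : (∑ T : Fin r → V, (1/n) * z T ^ ((k:ℝ)/d))
          = (∑ T : Fin r → V, (if bad T then (cnCard G T : ℝ) ^ k else 0)) / n := by
        rw [Finset.sum_div]
        exact Finset.sum_congr rfl fun T _ => by rw [hzp T]; ring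
      rw [lhs_eq, rhs_eq] at key
      have hsum_nn : 0 ≤ ∑ T : Fin r → V, z T := Finset.sum_nonneg fun T _ => hznn T
      have key2 : n ^ (1 - (k:ℝ)/d) * (∑ T : Fin r → V, z T) ^ ((k:ℝ)/d)
          ≤ ∑ T : Fin r → V, (if bad T then (cnCard G T : ℝ) ^ k else 0) := by
        have := mul_le_mul_of_nonneg_left key hnpos.le
        rw [mul_div_cancel₀ _ hnpos.ne'] at this
        refine le_trans (le_of_eq ?_) this
        rw [Real.div_rpow hsum_nn hnpos.le, Real.rpow_sub hnpos, Real.rpow_one]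
        ring
      have hNexp : (N:ℝ) ^ ((r:ℝ) - r * k / d) = n ^ (1 - (k:ℝ)/d) := by
        rw [hn, ← Real.rpow_natCast (N:ℝ) r, ← Real.rpow_mul hNR.le]
        congr 1
        ring
      calc β * (N:ℝ) ^ ((r:ℝ) - r * k / d) * (∑ T : Fin r → V, z T) ^ ((k:ℝ)/d)
          = β * (n ^ (1 - (k:ℝ)/d) * (∑ T : Fin r → V, z T) ^ ((k:ℝ)/d)) := by
            rw [hNexp]; ring
        _ ≤ β * ∑ T : Fin r → V, (if bad T then (cnCard G T : ℝ) ^ k else 0) :=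
            mul_le_mul_of_nonneg_left key2 hβ.le
end
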